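/- Estimate for the critical-mode Duhamel operator: let r ≥ 0, k₀ > 0, T > 0, ε > 0 and η̃ ≥ 2. Let a : ℝ → ℂ be measurable with Re a(k) ≤ ε² for all |k| ≤ k₀. Let f : [0,T] × ℝ → ℂ be such that t ↦ f(t,k) is continuous for each k, f(t,k) = 0 whenever |k| > k₀, and M := sup_{t∈[0,T]} e^{-η̃ε²t} ‖f(t,·)‖_{L^∞_0} < ∞. Then R(t,k) := ε² ∫₀^t e^{a(k)(t−τ)} f(τ,k) dτ satisfies sup_{t∈[0,T]} e^{-η̃ε²t} ‖R(t,·)‖_{L^∞_r} ≤ (1+k₀²)^{r/2} (η̃ − 1)^{-1} M. -/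

import Mathlib

/-!
Fix a mode `k` with `|k| ≤ k₀` (outside this range everything vanishes).
There `|e^{a(k)(t-τ)}| ≤ e^{ε²(t-τ)}` and `|f(τ,k)| ≤ e^{η̃ε²τ} M`, and
`∫₀ᵗ e^{ε²(t-τ)} e^{η̃ε²τ} dτ ≤ e^{η̃ε²t} / ((η̃-1)ε²)`, so the prefactor `ε²`
and the weight `e^{-η̃ε²t}` leave `(η̃-1)⁻¹ M`. The weight `(1+|k|²)^{r/2}`
costs at most `(1+k₀²)^{r/2}`.
-/

open MeasureTheory
open scoped ENNReal

/-- The weighted sup-norm `‖û‖_{L^∞_r} = sup_k |û(k)| (1+|k|²)^{r/2}`, valued in `ℝ≥0∞`. -/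
noncomputable def wnorm (r : ℝ) (u : ℝ → ℂ) : ℝ≥0∞ :=
  ⨆ k : ℝ, ENNReal.ofReal (‖u k‖ * (1 + |k| ^ 2) ^ (r / 2))

open Real Set

lemma integral_exp_mul_sub_mul_exp_le {γ ν : ℝ} (hγν : γ < ν) (t : ℝ) :
    ∫ τ in (0 : ℝ)..t, exp (γ * (t - τ)) * exp (ν * τ) ≤ exp (ν * t) / (ν - γ) := by
  have hc : ν - γ ≠ 0 := (sub_pos.2 hγν).ne'
  have hsplit : ∀ τ,
      exp (γ * (t - τ)) * exp (ν * τ) = exp (γ * t) * exp ((ν - γ) * τ) := by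
    intro τ
    rw [← exp_add, ← exp_add]
    ring_nf
  calc ∫ τ in (0 : ℝ)..t, exp (γ * (t - τ)) * exp (ν * τ)
      = (exp (ν * t) - exp (γ * t)) / (ν - γ) := by
        simp_rw [hsplit]
        rw [intervalIntegral.integral_const_mul,
          intervalIntegral.integral_comp_mul_left (fun x => exp x) hc, integral_exp, smul_eq_mul,
          mul_zero, exp_zero, show ν * t = γ * t + (ν - γ) * t by ring, exp_add]
        field_simp
    _ ≤ exp (ν * t) / (ν - γ) := by
        gcongr
        exact sub_le_self _ (exp_pos _).le

lemma norm_integral_cexp_mul_le {α : ℂ} {γ ν M t : ℝ} {g : ℝ → ℂ} (hα : α.re ≤ γ)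
    (hγν : γ < ν) (ht : 0 ≤ t) (hg : ∀ τ ∈ Icc 0 t, ‖g τ‖ ≤ exp (ν * τ) * M) :
    ‖∫ τ in (0 : ℝ)..t, Complex.exp (α * ((t - τ : ℝ) : ℂ)) * g τ‖ ≤
      exp (ν * t) / (ν - γ) * M := by
  have hM : 0 ≤ M := by simpa using (norm_nonneg _).trans (hg 0 ⟨le_rfl, ht⟩)
  have hmajorant : ∀ τ ∈ Ioc 0 t, ‖Complex.exp (α * ((t - τ : ℝ) : ℂ)) * g τ‖ ≤
      exp (γ * (t - τ)) * exp (ν * τ) * M := by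
    rintro τ ⟨hτ₀, hτt⟩
    rw [norm_mul, Complex.norm_exp, Complex.re_mul_ofReal, mul_assoc]
    gcongr
    exact hg τ ⟨hτ₀.le, hτt⟩
  have hcont : Continuous fun τ => exp (γ * (t - τ)) * exp (ν * τ) * M := by fun_prop
  calc _ ≤ ∫ τ in (0 : ℝ)..t, exp (γ * (t - τ)) * exp (ν * τ) * M :=
        intervalIntegral.norm_integral_le_of_norm_le ht (.of_forall hmajorant)
          (hcont.intervalIntegrable _ _)
    _ ≤ exp (ν * t) / (ν - γ) * M := by
        rw [intervalIntegral.integral_mul_const]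
        gcongr
        exact integral_exp_mul_sub_mul_exp_le hγν t

lemma ofReal_norm_le_wnorm_zero (u : ℝ → ℂ) (k : ℝ) :
    ENNReal.ofReal ‖u k‖ ≤ wnorm 0 u :=
  le_iSup_of_le k (by simp)

lemma ofReal_mul_wnorm_le {r c B : ℝ} {u : ℝ → ℂ} (hc : 0 ≤ c)
    (h : ∀ k, c * (‖u k‖ * (1 + |k| ^ 2) ^ (r / 2)) ≤ B) :
    ENNReal.ofReal c * wnorm r u ≤ ENNReal.ofReal B := by
  rw [wnorm, ENNReal.mul_iSup]
  exact iSup_le fun k =>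
    (ENNReal.ofReal_mul hc).symm.trans_le (ENNReal.ofReal_le_ofReal (h k))

lemma norm_le_exp_mul_toReal_of_iSup_ne_top {ν T τ : ℝ} {f : ℝ → ℝ → ℂ}
    (hM : (⨆ t ∈ Icc 0 T, ENNReal.ofReal (exp (-ν * t)) * wnorm 0 (f t)) ≠ ⊤)
    (hτ : τ ∈ Icc 0 T) (k : ℝ) :
    ‖f τ k‖ ≤
      exp (ν * τ) *
        (⨆ t ∈ Icc 0 T, ENNReal.ofReal (exp (-ν * t)) * wnorm 0 (f t)).toReal := by
  have hweighted : ENNReal.ofReal (exp (-ν * τ) * ‖f τ k‖) ≤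
      ⨆ t ∈ Icc 0 T, ENNReal.ofReal (exp (-ν * t)) * wnorm 0 (f t) := by
    rw [ENNReal.ofReal_mul (exp_pos _).le]
    refine le_iSup₂_of_le τ hτ ?_
    gcongr
    exact ofReal_norm_le_wnorm_zero _ k
  rw [ENNReal.ofReal_le_iff_le_toReal hM] at hweighted
  calc ‖f τ k‖ = exp (ν * τ) * (exp (-ν * τ) * ‖f τ k‖) := by
        rw [← mul_assoc, ← exp_add]
        simp
    _ ≤ _ := by gcongr

lemma weighted_norm_duhamel_le {r k₀ ε η t M k : ℝ} {α : ℂ} {g : ℝ → ℂ} (hr : 0 ≤ r)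
    (hε : 0 < ε) (hη : 1 < η) (ht : 0 ≤ t) (hα : |k| ≤ k₀ → α.re ≤ ε ^ 2)
    (hg_supp : k₀ < |k| → ∀ τ, g τ = 0)
    (hg : ∀ τ ∈ Icc 0 t, ‖g τ‖ ≤ exp (η * ε ^ 2 * τ) * M) :
    exp (-(η * ε ^ 2) * t) *
        (‖(ε ^ 2 : ℂ) * ∫ τ in (0 : ℝ)..t, Complex.exp (α * ((t - τ : ℝ) : ℂ)) * g τ‖ *
          (1 + |k| ^ 2) ^ (r / 2)) ≤
      (1 + k₀ ^ 2) ^ (r / 2) * (η - 1)⁻¹ * M := by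
  have hM : 0 ≤ M := by simpa using (norm_nonneg _).trans (hg 0 ⟨le_rfl, ht⟩)
  rcases lt_or_ge k₀ |k| with hk | hk
  · simp only [hg_supp hk, mul_zero, intervalIntegral.integral_zero, norm_zero, zero_mul]
    have := sub_pos.2 hη
    positivity
  have hgap : 0 < η * ε ^ 2 - ε ^ 2 := by
    rw [← sub_one_mul]
    exact mul_pos (sub_pos.2 hη) (pow_pos hε 2)
  have hduhamel := norm_integral_cexp_mul_le (hα hk) (sub_pos.1 hgap) ht hg
  have hweight : (1 + |k| ^ 2) ^ (r / 2) ≤ (1 + k₀ ^ 2) ^ (r / 2) := by gcongr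
  calc _ ≤ exp (-(η * ε ^ 2) * t) *
        (ε ^ 2 * (exp (η * ε ^ 2 * t) / (η * ε ^ 2 - ε ^ 2) * M) *
          (1 + k₀ ^ 2) ^ (r / 2)) := by
        rw [norm_mul, norm_pow, Complex.norm_real, norm_of_nonneg hε.le]
        gcongr
    _ = (1 + k₀ ^ 2) ^ (r / 2) * (η - 1)⁻¹ * M := by
        rw [show η * ε ^ 2 - ε ^ 2 = (η - 1) * ε ^ 2 by ring]
        field_simp
        rw [← exp_add, neg_add_cancel, exp_zero, one_mul]

theorem critical_mode_duhamel_estimate_general (r k₀ T ε ηt : ℝ)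
    (hr : 0 ≤ r) (hε : 0 < ε) (hηt : 2 ≤ ηt)
    (a : ℝ → ℂ)
    (ha : ∀ k : ℝ, |k| ≤ k₀ → (a k).re ≤ ε ^ 2)
    (f : ℝ → ℝ → ℂ)
    (hf_supp : ∀ t k : ℝ, k₀ < |k| → f t k = 0) :
    (⨆ t ∈ Set.Icc (0 : ℝ) T,
        ENNReal.ofReal (Real.exp (-(ηt * ε ^ 2) * t)) *
          wnorm r (fun k => (ε ^ 2 : ℂ) *
            ∫ τ in (0 : ℝ)..t, Complex.exp (a k * ((t - τ : ℝ) : ℂ)) * f τ k)) ≤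
      ENNReal.ofReal ((1 + k₀ ^ 2) ^ (r / 2) * (ηt - 1)⁻¹) *
        (⨆ t ∈ Set.Icc (0 : ℝ) T,
          ENNReal.ofReal (Real.exp (-(ηt * ε ^ 2) * t)) * wnorm 0 (f t)) := by
  set M := ⨆ t ∈ Icc (0 : ℝ) T, ENNReal.ofReal (exp (-(ηt * ε ^ 2) * t)) * wnorm 0 (f t)
  have hη : 1 < ηt := by linarith
  have hC : 0 < (1 + k₀ ^ 2) ^ (r / 2) * (ηt - 1)⁻¹ := by
    have := sub_pos.2 hη
    positivity
  rcases eq_or_ne M ⊤ with hM | hM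
  · rw [hM, ENNReal.mul_top (ENNReal.ofReal_pos.2 hC).ne']
    exact le_top
  refine iSup₂_le fun t ht => ?_
  rw [← ENNReal.ofReal_toReal hM, ← ENNReal.ofReal_mul hC.le]
  exact ofReal_mul_wnorm_le (exp_pos _).le fun k =>
    weighted_norm_duhamel_le hr hε hη ht.1 (ha k) (fun hk τ => hf_supp τ k hk) fun τ hτ =>
      norm_le_exp_mul_toReal_of_iSup_ne_top hM ⟨hτ.1, hτ.2.trans ht.2⟩ k

/-- estimate for the critical-mode Duhamel operator.  If `Re a(k) ≤ ε²` on
the compact critical support `|k| ≤ k₀`, `f(t,·)` is supported there, and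
`M = sup_{t∈[0,T]} e^{-η̃ε²t} ‖f(t,·)‖_{L^∞_0}`, then
`R(t,k) = ε² ∫₀ᵗ e^{a(k)(t−τ)} f(τ,k) dτ` satisfies
`sup_{t∈[0,T]} e^{-η̃ε²t} ‖R(t,·)‖_{L^∞_r} ≤ (1+k₀²)^{r/2} (η̃−1)⁻¹ M`. -/
theorem critical_mode_duhamel_estimate (r k₀ T ε ηt : ℝ)
    (hr : 0 ≤ r) (hk₀ : 0 < k₀) (hT : 0 < T) (hε : 0 < ε) (hηt : 2 ≤ ηt)
    (a : ℝ → ℂ) (ha_meas : Measurable a)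
    (ha : ∀ k : ℝ, |k| ≤ k₀ → (a k).re ≤ ε ^ 2)
    (f : ℝ → ℝ → ℂ)
    (hf_cont : ∀ k : ℝ, Continuous fun t => f t k)
    (hf_supp : ∀ t k : ℝ, k₀ < |k| → f t k = 0)
    (hM : (⨆ t ∈ Set.Icc (0 : ℝ) T,
        ENNReal.ofReal (Real.exp (-(ηt * ε ^ 2) * t)) * wnorm 0 (f t)) < ⊤) :
    (⨆ t ∈ Set.Icc (0 : ℝ) T,
        ENNReal.ofReal (Real.exp (-(ηt * ε ^ 2) * t)) *
          wnorm r (fun k => (ε ^ 2 : ℂ) *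
            ∫ τ in (0 : ℝ)..t, Complex.exp (a k * ((t - τ : ℝ) : ℂ)) * f τ k)) ≤
      ENNReal.ofReal ((1 + k₀ ^ 2) ^ (r / 2) * (ηt - 1)⁻¹) *
        (⨆ t ∈ Set.Icc (0 : ℝ) T,
          ENNReal.ofReal (Real.exp (-(ηt * ε ^ 2) * t)) * wnorm 0 (f t)) :=
  critical_mode_duhamel_estimate_general r k₀ T ε ηt hr hε hηt a ha f hf_supp
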